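/- arXiv:2402.14329 — 3 statements merged into one kernel-verified Lean document; each statement's English description precedes it below -/
import Mathlib

section
/- Let m : ℝ → ℂ be purely imaginary, ω ∈ ℝ^ν, and k, γ, T > 0 with k − γT > 0. For a family W with ‖W‖_{k,γ,T} = ∑_n sup_{|t|≤T} |Ŵ(t,n)| e^{(k−γ|t|)|n|} < ∞, define (ΦW)(t,n) = i⟨ω,n⟩ ∫_0^t e^{-(t-τ) m(⟨ω,n⟩)} Ŵ(τ,n) dτ. Then ‖ΦW‖_{k,γ,T} ≤ (|ω|/γ) ‖W‖_{k,γ,T}. -/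
/-!
Each Fourier mode is estimated separately. Since `m` is purely imaginary, the propagator
`e^{-(t-τ) m}` has modulus one, so on `[0, t]` the Duhamel integrand is bounded by
`S e^{-(k - γ|τ|)|n|}`, `S` being the weighted sup of the mode of `W`. The factor `|⟨ω, n⟩|`
is at most `|ω| |n|`, and the linear decay of the weight in time absorbs the remaining `|n|`:
`|n| e^{(k - γ|t|)|n|} ∫_0^{|t|} e^{-(k - γ τ)|n|} dτ = (1 - e^{-γ|t||n|}) / γ ≤ 1 / γ`.
Summing over `n` gives the estimate.
-/

open MeasureTheory intervalIntegral Set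

theorem abs_integral_zero_of_even_of_nonneg {f : ℝ → ℝ} (heven : ∀ x, f (-x) = f x)
    (hf : ∀ x, 0 ≤ f x) (t : ℝ) : |∫ x in 0..t, f x| = ∫ x in 0..|t|, f x := by
  rcases le_total 0 t with ht | ht
  · rw [abs_of_nonneg ht, abs_of_nonneg (integral_nonneg ht fun x _ => hf x)]
  · have hflip : ∫ x in 0..t, f x = -∫ x in 0..-t, f x := by
      simpa [heven, integral_symm (a := 0)] using integral_comp_neg (a := 0) (b := t) f
    rw [abs_of_nonpos ht, hflip, abs_neg,
      abs_of_nonneg (integral_nonneg (neg_nonneg.2 ht) fun x _ => hf x)]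

theorem mul_abs_integral_exp_neg_weight_le {k γ N : ℝ} (hγ : 0 < γ) (hN : 0 ≤ N) (t : ℝ) :
    N * |∫ τ in 0..t, Real.exp (-((k - γ * |τ|) * N))|
      ≤ Real.exp (-((k - γ * |t|) * N)) / γ := by
  rcases hN.eq_or_lt with rfl | hN
  · simp only [zero_mul]; positivity
  set e : ℝ → ℝ := fun s => Real.exp (-((k - γ * s) * N))
  have hderiv : ∀ s, HasDerivAt (fun s => e s / (γ * N)) (e s) s := fun s => by
    have hlin : HasDerivAt (fun s => -((k - γ * s) * N)) (γ * N) s := by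
      simpa using (((hasDerivAt_id' s).const_mul γ).const_sub k).mul_const N |>.fun_neg
    exact (hlin.exp.div_const (γ * N)).congr_deriv (by simp only [e]; field_simp)
  have hint : ∫ τ in 0..|t|, e |τ| = e |t| / (γ * N) - e 0 / (γ * N) := by
    rw [integral_congr fun τ hτ => by rw [abs_of_nonneg (uIcc_of_le (abs_nonneg t) ▸ hτ).1]]
    exact integral_eq_sub_of_hasDerivAt (fun s _ => hderiv s)
      (Continuous.intervalIntegrable (by fun_prop) _ _)
  rw [abs_integral_zero_of_even_of_nonneg (f := fun τ => e |τ|) (by simp)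
    (fun _ => by positivity), hint]
  calc N * (e |t| / (γ * N) - e 0 / (γ * N)) = (e |t| - e 0) / γ := by field_simp
    _ ≤ e |t| / γ := by gcongr; exact sub_le_self _ (by positivity)

theorem norm_exp_neg_ofReal_mul {μ : ℂ} (hμ : μ.re = 0) (s : ℝ) :
    ‖Complex.exp (-(s : ℂ) * μ)‖ = 1 := by
  simp [Complex.norm_exp, hμ]

theorem norm_duhamel_mul_weight_le {μ : ℂ} (hμ : μ.re = 0) {f : ℝ → ℂ} {k γ N S t : ℝ}
    (hγ : 0 < γ) (hN : 0 ≤ N) (hS : 0 ≤ S)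
    (hf : ∀ τ ∈ uIcc 0 t, ‖f τ‖ * Real.exp ((k - γ * |τ|) * N) ≤ S) :
    N * ‖∫ τ in 0..t, Complex.exp (-((t - τ : ℝ) : ℂ) * μ) * f τ‖ *
        Real.exp ((k - γ * |t|) * N) ≤ S / γ := by
  have hbound : ∀ τ ∈ uIoc 0 t, ‖Complex.exp (-((t - τ : ℝ) : ℂ) * μ) * f τ‖ ≤
      S * Real.exp (-((k - γ * |τ|) * N)) := fun τ hτ => by
    rw [norm_mul, norm_exp_neg_ofReal_mul hμ, one_mul, Real.exp_neg, ← div_eq_mul_inv,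
      le_div_iff₀ (Real.exp_pos _)]
    exact hf τ (uIoc_subset_uIcc hτ)
  have hint := norm_integral_le_abs_of_norm_le (ae_restrict_of_forall_mem measurableSet_uIoc hbound)
    (Continuous.intervalIntegrable (μ := volume) (by fun_prop) 0 t)
  rw [intervalIntegral.integral_const_mul, abs_mul, abs_of_nonneg hS] at hint
  calc N * ‖∫ τ in 0..t, Complex.exp (-((t - τ : ℝ) : ℂ) * μ) * f τ‖ *
        Real.exp ((k - γ * |t|) * N)
      ≤ S * (N * |∫ τ in 0..t, Real.exp (-((k - γ * |τ|) * N))|) *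
          Real.exp ((k - γ * |t|) * N) := by
        rw [mul_left_comm]; gcongr
    _ ≤ S * (Real.exp (-((k - γ * |t|) * N)) / γ) * Real.exp ((k - γ * |t|) * N) := by
        gcongr; exact mul_abs_integral_exp_neg_weight_le hγ hN t
    _ = S / γ := by rw [Real.exp_neg]; field_simp

/-- The norm `sup_{|t| ≤ T} ‖f t‖ e^{(k - γ|t|) N}` of one Fourier mode, with `N = |n|`. -/
noncomputable def weightedSup (T k γ N : ℝ) (f : ℝ → ℂ) : ℝ :=
  ⨆ t : Icc (-T) T, ‖f t‖ * Real.exp ((k - γ * |(t : ℝ)|) * N)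

theorem le_weightedSup {T k γ N : ℝ} {f : ℝ → ℂ} (hf : ContinuousOn f (Icc (-T) T))
    {t : ℝ} (ht : t ∈ Icc (-T) T) :
    ‖f t‖ * Real.exp ((k - γ * |t|) * N) ≤ weightedSup T k γ N f := by
  have hbdd := (isCompact_Icc.image_of_continuousOn
    ((hf.norm).mul (by fun_prop) : ContinuousOn
      (fun t => ‖f t‖ * Real.exp ((k - γ * |t|) * N)) (Icc (-T) T))).bddAbove
  rw [image_eq_range] at hbdd
  exact le_ciSup hbdd ⟨t, ht⟩

theorem weightedSup_le {T k γ N C : ℝ} {f : ℝ → ℂ} (hT : 0 ≤ T)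
    (h : ∀ t ∈ Icc (-T) T, ‖f t‖ * Real.exp ((k - γ * |t|) * N) ≤ C) :
    weightedSup T k γ N f ≤ C :=
  haveI : Nonempty (Icc (-T) T) := ⟨⟨0, by simpa using hT⟩⟩
  ciSup_le fun t => h t t.2

theorem weightedSup_nonneg (T k γ N : ℝ) (f : ℝ → ℂ) : 0 ≤ weightedSup T k γ N f :=
  Real.iSup_nonneg fun _ => by positivity

theorem weightedSup_duhamel_le {μ : ℂ} (hμ : μ.re = 0) {f : ℝ → ℂ} {T k γ N a A : ℝ}
    (hγ : 0 < γ) (hT : 0 ≤ T) (hN : 0 ≤ N) (hA : 0 ≤ A) (ha : |a| ≤ A * N)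
    (hf : ContinuousOn f (Icc (-T) T)) :
    weightedSup T k γ N
        (fun t => Complex.I * a * ∫ τ in 0..t, Complex.exp (-((t - τ : ℝ) : ℂ) * μ) * f τ)
      ≤ A / γ * weightedSup T k γ N f := by
  refine weightedSup_le hT fun t ht => ?_
  have hsub : uIcc 0 t ⊆ Icc (-T) T := uIcc_subset_Icc (by simpa using hT) ht
  have hduh := norm_duhamel_mul_weight_le hμ hγ hN (weightedSup_nonneg T k γ N f)
    fun τ hτ => le_weightedSup hf (hsub hτ)
  calc ‖Complex.I * a * ∫ τ in 0..t, Complex.exp (-((t - τ : ℝ) : ℂ) * μ) * f τ‖ *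
        Real.exp ((k - γ * |t|) * N)
      = |a| * ‖∫ τ in 0..t, Complex.exp (-((t - τ : ℝ) : ℂ) * μ) * f τ‖ *
          Real.exp ((k - γ * |t|) * N) := by
        rw [norm_mul, norm_mul, Complex.norm_I, one_mul, Complex.norm_real, Real.norm_eq_abs]
    _ ≤ A * (N * ‖∫ τ in 0..t, Complex.exp (-((t - τ : ℝ) : ℂ) * μ) * f τ‖ *
          Real.exp ((k - γ * |t|) * N)) := by
        rw [show ∀ x y : ℝ, A * (N * x * y) = A * N * x * y by intros; ring]; gcongr
    _ ≤ A * (weightedSup T k γ N f / γ) := by gcongr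
    _ = A / γ * weightedSup T k γ N f := by ring

theorem abs_sum_mul_le_norm_mul_sum_abs {ι : Type*} [Fintype ι] (ω : EuclideanSpace ℝ ι)
    (x : ι → ℝ) : |∑ i, ω i * x i| ≤ ‖ω‖ * ∑ i, |x i| := by
  rw [Finset.mul_sum]
  refine (Finset.abs_sum_le_sum_abs _ _).trans (Finset.sum_le_sum fun i _ => ?_)
  rw [abs_mul]
  gcongr
  exact PiLp.norm_apply_le ω i

theorem stmt7_general (ν : ℕ) (k γ T : ℝ) (hγ : 0 < γ) (hT : 0 < T)
    (ω : EuclideanSpace ℝ (Fin ν))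
    (m : ℝ → ℂ) (him : ∀ ξ, (m ξ).re = 0)
    (W : ℝ → (Fin ν → ℤ) → ℂ) (hWc : ∀ n, Continuous fun t => W t n)
    (hW : Summable (fun n : Fin ν → ℤ =>
      ⨆ t : Set.Icc (-T) T,
        ‖W (t : ℝ) n‖ * Real.exp ((k - γ * |(t : ℝ)|) * (∑ i, |(n i : ℝ)|)))) :
    ∑' n : Fin ν → ℤ, ⨆ t : Set.Icc (-T) T,
        ‖(Complex.I * ((∑ i, ω i * (n i : ℝ) : ℝ) : ℂ)) *
            ∫ τ in (0 : ℝ)..(t : ℝ),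
              Complex.exp (-(((t : ℝ) - τ : ℝ) : ℂ) * m (∑ i, ω i * (n i : ℝ))) * W τ n‖ *
          Real.exp ((k - γ * |(t : ℝ)|) * (∑ i, |(n i : ℝ)|))
      ≤ (‖ω‖ / γ) *
        ∑' n : Fin ν → ℤ, ⨆ t : Set.Icc (-T) T,
          ‖W (t : ℝ) n‖ * Real.exp ((k - γ * |(t : ℝ)|) * (∑ i, |(n i : ℝ)|)) := by
  have hmode (n : Fin ν → ℤ) :=
    weightedSup_duhamel_le (him (∑ i, ω i * (n i : ℝ))) hγ hT.le
      (Finset.sum_nonneg fun i _ => abs_nonneg _) (norm_nonneg ω)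
      (abs_sum_mul_le_norm_mul_sum_abs ω fun i => (n i : ℝ)) (k := k) (hWc n).continuousOn
  have hsum := hW.mul_left (‖ω‖ / γ)
  rw [← tsum_mul_left]
  exact (hsum.of_nonneg_of_le (fun n => weightedSup_nonneg ..) hmode).tsum_le_tsum hmode hsum

/-- Second linear (Duhamel) estimate: for purely imaginary symbol `m`, the operator
`(ΦW)(t,n) = i⟨ω,n⟩ ∫_0^t e^{-(t-τ)m(⟨ω,n⟩)} Ŵ(τ,n) dτ` satisfies
`‖ΦW‖_{k,γ,T} ≤ (|ω|/γ) ‖W‖_{k,γ,T}`. -/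
theorem stmt7 (ν : ℕ) (k γ T : ℝ) (hγ : 0 < γ) (hT : 0 < T) (hkγT : 0 < k - γ * T)
    (ω : EuclideanSpace ℝ (Fin ν))
    (m : ℝ → ℂ) (him : ∀ ξ, (m ξ).re = 0)
    (W : ℝ → (Fin ν → ℤ) → ℂ) (hWc : ∀ n, Continuous fun t => W t n)
    (hW : Summable (fun n : Fin ν → ℤ =>
      ⨆ t : Set.Icc (-T) T,
        ‖W (t : ℝ) n‖ * Real.exp ((k - γ * |(t : ℝ)|) * (∑ i, |(n i : ℝ)|)))) :
    ∑' n : Fin ν → ℤ, ⨆ t : Set.Icc (-T) T,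
        ‖(Complex.I * ((∑ i, ω i * (n i : ℝ) : ℝ) : ℂ)) *
            ∫ τ in (0 : ℝ)..(t : ℝ),
              Complex.exp (-(((t : ℝ) - τ : ℝ) : ℂ) * m (∑ i, ω i * (n i : ℝ))) * W τ n‖ *
          Real.exp ((k - γ * |(t : ℝ)|) * (∑ i, |(n i : ℝ)|))
      ≤ (‖ω‖ / γ) *
        ∑' n : Fin ν → ℤ, ⨆ t : Set.Icc (-T) T,
          ‖W (t : ℝ) n‖ * Real.exp ((k - γ * |(t : ℝ)|) * (∑ i, |(n i : ℝ)|)) :=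
  stmt7_general ν k γ T hγ hT ω m him W hWc hW
end

section
/- Let α = ∑_{n=1}^∞ 1/(10↑↑n), ω = (1, α), and let 0 < κ ≤ (ln 9)/4. Then the function u with Fourier coefficients û(n) = e^{-κ|n|} (n ∈ ℤ²) satisfies: there exist infinitely many n ∈ ℤ² with |⟨ω, n⟩|^{-1/2} |û(n)| ≥ 1, so that in particular the sum ∑_{n ∈ ℤ²} |⟨ω,n⟩|^{-1} |û(n)|² diverges. -/
/-!
For `q = 10↑↑k` let `p` be the integer formed by the first `k` terms of `q α`. The remainder
`q α - p = ∑_{m>k} 10↑↑k / 10↑↑m` is dominated by its first term `q / 10^q`, hence at most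
`9^{-q}`. As `p ≤ q` and `4κ ≤ ln 9`, this is at most `e^{-2κ(p+q)}`, which says exactly that the
term at `n = (-p, q)` is at least `1`. Infinitely many terms `≥ 1` also preclude summability of
their squares, which form the second series.
-/

/-- `tow n = 10↑↑n` for `n ≥ 1` (with `tow 0 = 1`): the `n`-fold power tower of 10s. -/
def tow : ℕ → ℕ
  | 0 => 1
  | n + 1 => 10 ^ tow n

lemma tow_pos (n : ℕ) : 0 < tow n := by
  cases n with
  | zero => exact Nat.one_pos
  | succ n => exact Nat.pow_pos (by norm_num)

lemma tow_strictMono : StrictMono tow :=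
  strictMono_nat_of_lt_succ fun n => Nat.lt_pow_self (by norm_num)

lemma tow_dvd_tow {m n : ℕ} (h : m ≤ n) : tow m ∣ tow n := by
  cases m with
  | zero => exact one_dvd _
  | succ m =>
    obtain ⟨n, rfl⟩ : ∃ n', n = n' + 1 := ⟨n - 1, by omega⟩
    exact pow_dvd_pow _ (tow_strictMono.monotone (by omega))

lemma ten_mul_tow_le_tow_succ (n : ℕ) : 10 * tow n ≤ tow (n + 1) := by
  obtain ⟨m, hm⟩ : ∃ m, tow n = m + 1 := ⟨tow n - 1, by have := tow_pos n; omega⟩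
  rw [show tow (n + 1) = 10 ^ tow n from rfl, hm, pow_succ, mul_comm]
  exact Nat.mul_le_mul_right _ (Nat.lt_pow_self (by norm_num))

lemma tow_mul_ten_pow_le (m j : ℕ) : tow m * 10 ^ j ≤ tow (j + m) := by
  induction j with
  | zero => simp
  | succ j ih =>
    calc tow m * 10 ^ (j + 1) = 10 * (tow m * 10 ^ j) := by ring
      _ ≤ 10 * tow (j + m) := Nat.mul_le_mul_left _ ih
      _ ≤ tow (j + 1 + m) := by rw [Nat.add_right_comm]; exact ten_mul_tow_le_tow_succ _

lemma div_tow_add_le {c : ℝ} (hc : 0 ≤ c) (m j : ℕ) :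
    c / tow (j + m) ≤ c / tow m * (1 / 10) ^ j := by
  have hm : (0 : ℝ) < tow m := by exact_mod_cast tow_pos m
  rw [one_div_pow, mul_one_div, div_div]
  exact div_le_div_of_nonneg_left hc (by positivity) (by exact_mod_cast tow_mul_ten_pow_le m j)

lemma summable_div_tow_add {c : ℝ} (hc : 0 ≤ c) (m : ℕ) :
    Summable fun j : ℕ => c / tow (j + m) :=
  ((summable_geometric_of_lt_one (by norm_num) (by norm_num)).mul_left _).of_nonneg_of_le
    (fun _ => by positivity) (div_tow_add_le hc m)

lemma tsum_div_tow_add_le {c : ℝ} (hc : 0 ≤ c) (m : ℕ) :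
    ∑' j : ℕ, c / tow (j + m) ≤ 10 / 9 * (c / tow m) := by
  calc ∑' j : ℕ, c / tow (j + m) ≤ ∑' j : ℕ, c / tow m * (1 / 10) ^ j :=
        (summable_div_tow_add hc m).tsum_le_tsum (div_tow_add_le hc m)
          ((summable_geometric_of_lt_one (by norm_num) (by norm_num)).mul_left _)
    _ = 10 / 9 * (c / tow m) := by
        rw [tsum_mul_left, tsum_geometric_of_lt_one (by norm_num) (by norm_num)]
        ring

noncomputable def towSum : ℝ := ∑' j : ℕ, (1 : ℝ) / tow (j + 1)

lemma towSum_le_one : towSum ≤ 1 :=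
  (tsum_div_tow_add_le zero_le_one 1).trans (by norm_num [tow])

/-- The first `k` terms of `tow k * towSum`; each quotient is exact by `tow_dvd_tow`, so the
remainder `tow k * towSum - convergentNum k` is `towTail k`. -/
def convergentNum (k : ℕ) : ℕ := ∑ j ∈ Finset.range k, tow k / tow (j + 1)

noncomputable def towTail (k : ℕ) : ℝ := ∑' j : ℕ, (tow k : ℝ) / tow (j + (k + 1))

lemma tow_mul_towSum (k : ℕ) : tow k * towSum = convergentNum k + towTail k := by
  rw [towSum, ← tsum_mul_left,
    ← ((summable_div_tow_add zero_le_one 1).mul_left _).sum_add_tsum_nat_add k, convergentNum,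
    Nat.cast_sum, towTail]
  congr 1
  · refine Finset.sum_congr rfl fun j hj => ?_
    rw [Nat.cast_div (tow_dvd_tow (Finset.mem_range.mp hj)) (by exact_mod_cast (tow_pos _).ne'),
      mul_one_div]
  · exact tsum_congr fun j => by rw [mul_one_div, add_assoc]

lemma towTail_pos (k : ℕ) : 0 < towTail k := by
  have hk : (0 : ℝ) < tow k := by exact_mod_cast tow_pos k
  have hk' : (0 : ℝ) < tow (0 + (k + 1)) := by exact_mod_cast tow_pos _
  exact (summable_div_tow_add hk.le _).tsum_pos (fun _ => by positivity) 0 (div_pos hk hk')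

lemma convergentNum_le (k : ℕ) : (convergentNum k : ℝ) ≤ tow k := by
  have hα : tow k * towSum ≤ tow k := mul_le_of_le_one_right (by positivity) towSum_le_one
  linarith [tow_mul_towSum k, towTail_pos k]

lemma towTail_le (k : ℕ) : towTail k ≤ 2 * tow k / 10 ^ tow k := by
  have h := tsum_div_tow_add_le (Nat.cast_nonneg (tow k)) (k + 1)
  rw [show tow (k + 1) = 10 ^ tow k from rfl, Nat.cast_pow, Nat.cast_ofNat] at h
  calc towTail k ≤ 10 / 9 * (tow k / 10 ^ tow k) := h
    _ ≤ 2 * tow k / 10 ^ tow k := by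
        rw [mul_div_assoc]
        exact mul_le_mul_of_nonneg_right (by norm_num) (by positivity)

lemma two_mul_mul_nine_pow_le_ten_pow {N : ℕ} (hN : 100 ≤ N) : 2 * N * 9 ^ N ≤ 10 ^ N := by
  induction N, hN using Nat.le_induction with
  | base => norm_num
  | succ n hn ih =>
    calc 2 * (n + 1) * 9 ^ (n + 1) = 9 * (n + 1) * (2 * 9 ^ n) := by ring
      _ ≤ 10 * n * (2 * 9 ^ n) := Nat.mul_le_mul_right _ (by omega)
      _ = 10 * (2 * n * 9 ^ n) := by ring
      _ ≤ 10 ^ (n + 1) := by rw [pow_succ']; exact Nat.mul_le_mul_left _ ih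

lemma towTail_le_inv_nine_pow {k : ℕ} (hk : 2 ≤ k) : towTail k ≤ ((9 : ℝ) ^ tow k)⁻¹ := by
  have hN : 100 ≤ tow k := le_trans (by norm_num [tow]) (tow_strictMono.monotone hk)
  have hkey : (2 * tow k * 9 ^ tow k : ℝ) ≤ 10 ^ tow k := by
    exact_mod_cast two_mul_mul_nine_pow_le_ten_pow hN
  refine (towTail_le k).trans ?_
  rw [div_le_iff₀ (by positivity), inv_mul_eq_div, le_div_iff₀ (by positivity)]
  exact hkey

lemma inv_nine_pow_le_exp {κ p : ℝ} (hκ : κ ≤ Real.log 9 / 4) {q : ℕ} (hp : 0 ≤ p)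
    (hpq : p ≤ q) :
    ((9 : ℝ) ^ q)⁻¹ ≤ Real.exp (-(2 * κ) * (p + q)) := by
  have hlog := Real.log_pos (by norm_num : (1 : ℝ) < 9)
  have harg : 2 * κ * (p + q) ≤ q * Real.log 9 := by
    rcases le_total 0 κ with hκ0 | hκ0 <;> nlinarith
  rw [← Real.exp_log (by norm_num : (0 : ℝ) < 9), ← Real.exp_nat_mul, ← Real.exp_neg, neg_mul]
  exact Real.exp_le_exp.mpr (neg_le_neg harg)

lemma one_le_rpow_neg_half_mul_exp {R c : ℝ} (hR : 0 < R) (h : R ≤ Real.exp (-(2 * c))) :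
    1 ≤ R ^ (-(1 / 2 : ℝ)) * Real.exp (-c) := by
  have h' : Real.exp c ≤ R ^ (-(1 / 2 : ℝ)) := by
    calc Real.exp c = Real.exp (-(2 * c)) ^ (-(1 / 2 : ℝ)) := by rw [← Real.exp_mul]; ring_nf
      _ ≤ R ^ (-(1 / 2 : ℝ)) := Real.rpow_le_rpow_of_nonpos hR h (by norm_num)
  calc (1 : ℝ) = Real.exp c * Real.exp (-c) := by
        rw [← Real.exp_add, add_neg_cancel, Real.exp_zero]
    _ ≤ R ^ (-(1 / 2 : ℝ)) * Real.exp (-c) := mul_le_mul_of_nonneg_right h' (Real.exp_pos _).le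

lemma one_le_rpow_neg_half_towTail_mul_exp {κ : ℝ} (hκ : κ ≤ Real.log 9 / 4) {k : ℕ}
    (hk : 2 ≤ k) :
    1 ≤ towTail k ^ (-(1 / 2 : ℝ)) * Real.exp (-κ * (convergentNum k + tow k)) := by
  rw [neg_mul]
  refine one_le_rpow_neg_half_mul_exp (towTail_pos k) ((towTail_le_inv_nine_pow hk).trans ?_)
  rw [← mul_assoc, ← neg_mul]
  exact inv_nine_pow_le_exp hκ (Nat.cast_nonneg _) (convergentNum_le k)

-- No hypothesis on `x`: at `x = 0` both sides vanish, as `0 ^ (-1/2) = 0` and `0⁻¹ = 0`.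
lemma rpow_neg_half_mul_sq (x E : ℝ) : (|x| ^ (-(1 / 2 : ℝ)) * E) ^ 2 = |x|⁻¹ * E ^ 2 := by
  rw [mul_pow, ← Real.rpow_mul_natCast (abs_nonneg x)]
  norm_num [Real.rpow_neg_one]

lemma not_summable_of_infinite_one_le {ι : Type*} {f : ι → ℝ} (h : {i | 1 ≤ f i}.Infinite) :
    ¬ Summable f := fun hf =>
  h <| (Filter.eventually_cofinite.mp
    (hf.tendsto_cofinite_zero.eventually (gt_mem_nhds one_pos))).subset fun _ hi => not_lt.mpr hi

theorem stmt11_general (κ : ℝ) (hκ : κ ≤ Real.log 9 / 4) :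
    {n : ℤ × ℤ |
        1 ≤ |(n.1 : ℝ) + (∑' j : ℕ, (1 : ℝ) / tow (j + 1)) * (n.2 : ℝ)| ^ (-(1 / 2 : ℝ)) *
          Real.exp (-κ * (|(n.1 : ℝ)| + |(n.2 : ℝ)|))}.Infinite ∧
    ¬ Summable (fun n : ℤ × ℤ =>
        |(n.1 : ℝ) + (∑' j : ℕ, (1 : ℝ) / tow (j + 1)) * (n.2 : ℝ)|⁻¹ *
          (Real.exp (-κ * (|(n.1 : ℝ)| + |(n.2 : ℝ)|))) ^ 2) := by
  set S := {n : ℤ × ℤ |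
      1 ≤ |(n.1 : ℝ) + (∑' j : ℕ, (1 : ℝ) / tow (j + 1)) * (n.2 : ℝ)| ^ (-(1 / 2 : ℝ)) *
        Real.exp (-κ * (|(n.1 : ℝ)| + |(n.2 : ℝ)|))}
  have hmem (k : ℕ) : ((-(convergentNum (k + 2) : ℤ), (tow (k + 2) : ℤ)) : ℤ × ℤ) ∈ S := by
    have hsmall : -(convergentNum (k + 2) : ℝ) + towSum * tow (k + 2) = towTail (k + 2) := by
      linarith [tow_mul_towSum (k + 2)]
    simp only [S, Set.mem_ofPred_eq, Int.cast_neg, Int.cast_natCast, abs_neg, Nat.abs_cast]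
    rw [← towSum, hsmall, abs_of_pos (towTail_pos _)]
    exact one_le_rpow_neg_half_towTail_mul_exp hκ (by omega)
  have hinj : Function.Injective fun k : ℕ =>
      ((-(convergentNum (k + 2) : ℤ), (tow (k + 2) : ℤ)) : ℤ × ℤ) := fun a b hab => by
    have := tow_strictMono.injective (Int.ofNat_inj.mp (congrArg Prod.snd hab))
    omega
  have hS : S.Infinite := Set.infinite_of_injective_forall_mem hinj hmem
  refine ⟨hS, not_summable_of_infinite_one_le (hS.mono fun n hn => ?_)⟩
  simp only [Set.mem_ofPred_eq, ← rpow_neg_half_mul_sq]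
  exact one_le_pow₀ hn

/-- With `α = ∑_{n≥1} 1/(10↑↑n)`, `ω = (1,α)` and `0 < κ ≤ (ln 9)/4`, the analytic
quasi-periodic function with coefficients `û(n) = e^{-κ|n|}` has infinitely many `n ∈ ℤ²`
with `|⟨ω,n⟩|^{-1/2} û(n) ≥ 1`; in particular `∑_n |⟨ω,n⟩|⁻¹ |û(n)|²` diverges. -/
theorem stmt11 (κ : ℝ) (hκ0 : 0 < κ) (hκ : κ ≤ Real.log 9 / 4) :
    {n : ℤ × ℤ |
        1 ≤ |(n.1 : ℝ) + (∑' j : ℕ, (1 : ℝ) / tow (j + 1)) * (n.2 : ℝ)| ^ (-(1 / 2 : ℝ)) *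
          Real.exp (-κ * (|(n.1 : ℝ)| + |(n.2 : ℝ)|))}.Infinite ∧
    ¬ Summable (fun n : ℤ × ℤ =>
        |(n.1 : ℝ) + (∑' j : ℕ, (1 : ℝ) / tow (j + 1)) * (n.2 : ℝ)|⁻¹ *
          (Real.exp (-κ * (|(n.1 : ℝ)| + |(n.2 : ℝ)|))) ^ 2) :=
  stmt11_general κ hκ
end

section
/- With α = ∑_{n=1}^∞ 1/(10↑↑n), q_n = 10↑↑n, and C(n) = ∑_{m>n} (10↑↑n)/(10↑↑m), one has C(n) ≤ 2 q_n / 10^{q_n} for all n ≥ 1. -/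
theorem tsum_div_le_of_two_mul_le {a : ℕ → ℝ} {c : ℝ} (hc : 0 ≤ c) (h0 : 0 < a 0)
    (ha : ∀ k, 2 * a k ≤ a (k + 1)) : ∑' j, c / a j ≤ 2 * c / a 0 := by
  have hgeom (j : ℕ) : 2 ^ j * a 0 ≤ a j := geom_le zero_le_two j fun k _ => ha k
  have hpos (j : ℕ) : 0 < a j := (by positivity : 0 < 2 ^ j * a 0).trans_le (hgeom j)
  have hnonneg (j : ℕ) : 0 ≤ c / a j := div_nonneg hc (hpos j).le
  have hbound (j : ℕ) : c / a j ≤ c / a 0 * (1 / 2) ^ j :=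
    calc c / a j ≤ c / (2 ^ j * a 0) := div_le_div_of_nonneg_left hc (by positivity) (hgeom j)
      _ = c / a 0 * (1 / 2) ^ j := by rw [one_div_pow]; ring
  have hsum : Summable fun j : ℕ => c / a 0 * (1 / 2) ^ j := summable_geometric_two.mul_left _
  calc ∑' j, c / a j ≤ ∑' j : ℕ, c / a 0 * (1 / 2) ^ j :=
        (hsum.of_nonneg_of_le hnonneg hbound).tsum_le_tsum hbound hsum
    _ = 2 * c / a 0 := by rw [tsum_mul_left, tsum_geometric_two]; ring

theorem tow_pos_s12 : ∀ k, 0 < tow k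
  | 0 => Nat.one_pos
  | k + 1 => Nat.pow_pos (by norm_num)

theorem two_mul_tow_le_tow_succ (k : ℕ) : 2 * tow k ≤ tow (k + 1) :=
  (Nat.mul_le_mul_right _ (by norm_num)).trans (Nat.mul_le_pow (by norm_num) (tow k))

theorem stmt12_general (n : ℕ) :
    (∑' j : ℕ, (tow n : ℝ) / tow (n + 1 + j)) ≤ 2 * (tow n : ℝ) / (10 : ℝ) ^ (tow n) := by
  calc ∑' j : ℕ, (tow n : ℝ) / tow (n + 1 + j) ≤ 2 * (tow n : ℝ) / tow (n + 1 + 0) :=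
        tsum_div_le_of_two_mul_le (Nat.cast_nonneg _) (mod_cast tow_pos_s12 _)
          fun k => mod_cast two_mul_tow_le_tow_succ (n + 1 + k)
    _ = 2 * (tow n : ℝ) / (10 : ℝ) ^ (tow n) := by simp [tow]

/-- `C(n) = ∑_{m>n} (10↑↑n)/(10↑↑m) ≤ 2 q_n / 10^{q_n}` with `q_n = 10↑↑n`. -/
theorem stmt12 (n : ℕ) (hn : 1 ≤ n) :
    (∑' j : ℕ, (tow n : ℝ) / tow (n + 1 + j)) ≤ 2 * (tow n : ℝ) / (10 : ℝ) ^ (tow n) :=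
  stmt12_general n
end
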